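/- Let $V$ be a finite-dimensional real vector space, $\Theta \in \Lambda^n V^*$ with $n > 1$, and let $K = \ker_1 d\Theta$ be replaced abstractly by a subspace $K \subseteq V$ satisfying $\iota_{R\wedge R'}\Theta = 0$ for all $R, R' \in K$ (the variational condition). Define $\mathcal{H} = \{h \in \Lambda^n V^* : \iota_v h \in \{\iota_R\Theta : R \in K\} \text{ for all } v \in V\}$. Then for every $h \in \mathcal{H}$ and every $R \in K$, $\iota_R h = 0$. -/

import Mathlib

namespace AlternatingMap

variable {R M N : Type*} [CommRing R] [AddCommGroup M] [Module R M] [AddCommGroup N] [Module R N]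
  {n : ℕ}

/-- Polarization of `curryLeft_same` at `a + b`. -/
theorem curryLeft_curryLeft_swap (f : M [⋀^Fin (n + 2)]→ₗ[R] N) (a b : M) :
    (f.curryLeft a).curryLeft b = -(f.curryLeft b).curryLeft a := by
  have h := f.curryLeft_same (a + b)
  simp only [map_add, curryLeft_add, LinearMap.add_apply, curryLeft_same, zero_add,
    add_zero] at h
  exact eq_neg_of_add_eq_zero_right h

theorem eq_zero_of_curryLeft_eq_zero {f : M [⋀^Fin (n + 1)]→ₗ[R] N} (hf : f.curryLeft = 0) :
    f = 0 := by
  ext m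
  rw [← Matrix.cons_head_tail m, ← curryLeft_apply_apply, hf]
  rfl

end AlternatingMap

theorem stmt14_general
    (V : Type*) [AddCommGroup V] [Module ℝ V] (n : ℕ)
    (Θ : V [⋀^Fin (n + 2)]→ₗ[ℝ] ℝ) (K : Submodule ℝ V)
    (hvar : ∀ R ∈ K, ∀ R' ∈ K, (Θ.curryLeft R).curryLeft R' = 0)
    (h : V [⋀^Fin (n + 2)]→ₗ[ℝ] ℝ)
    (hH : ∀ v : V, ∃ R ∈ K, h.curryLeft v = Θ.curryLeft R) :
    ∀ R ∈ K, h.curryLeft R = 0 := by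
  intro R hR
  refine AlternatingMap.eq_zero_of_curryLeft_eq_zero (LinearMap.ext fun v => ?_)
  obtain ⟨R', hR', hv⟩ := hH v
  rw [AlternatingMap.curryLeft_curryLeft_swap, hv, hvar R' hR' R hR, neg_zero,
    LinearMap.zero_apply]

theorem stmt14
    (V : Type*) [AddCommGroup V] [Module ℝ V] [FiniteDimensional ℝ V] (n : ℕ)
    (Θ : V [⋀^Fin (n + 2)]→ₗ[ℝ] ℝ) (K : Submodule ℝ V)
    (hvar : ∀ R ∈ K, ∀ R' ∈ K, (Θ.curryLeft R).curryLeft R' = 0)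
    (h : V [⋀^Fin (n + 2)]→ₗ[ℝ] ℝ)
    (hH : ∀ v : V, ∃ R ∈ K, h.curryLeft v = Θ.curryLeft R) :
    ∀ R ∈ K, h.curryLeft R = 0 :=
  stmt14_general V n Θ K hvar h hH
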